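/- For every integer n ≥ 1, ∑_{j=1}^{n} H_{j,2}^2/((j+1)(j+2)) = H_{n+1,2}^2 − H_{n+1,2} − H_{n+1,3} + 1 − H_{n+2,2}^2/(n+2) + 2H_{n+1,2}/(n+2) − 1/(n+2) + 2H_{n+2,2}/(n+2)^3 − 1/(n+2)^5. Consequently, ∑_{j=1}^{n} H_{j,2}^2/((j+1)(j+2)) → π⁴/36 − π²/6 − ζ(3) + 1 as n → ∞. -/

import Mathlib

open Finset Filter Real Topology

/-- Generalized harmonic number `H (n, m) = ∑_{i=1}^{n} 1/i^m` as a real number. -/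
noncomputable def H (n m : ℕ) : ℝ := ∑ i ∈ Finset.Icc 1 n, (1 : ℝ) / (i : ℝ) ^ m

/-- Apéry's constant `ζ(3) = ∑_{k=1}^{∞} 1/k³`. -/
noncomputable def zeta3 : ℝ := ∑' k : ℕ, 1 / ((k : ℝ) + 1) ^ 3

lemma H_succ (n m : ℕ) : H (n + 1) m = H n m + 1 / ((n : ℝ) + 1) ^ m := by
  unfold H
  rw [show Finset.Icc 1 (n+1) = insert (n+1) (Finset.Icc 1 n) by
        ext x; simp [Nat.lt_succ_iff]; omega,
      Finset.sum_insert (by simp)]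
  push_cast
  ring

lemma H_zero (m : ℕ) : H 0 m = 0 := by simp [H]

lemma H_range (n m : ℕ) : H n m = ∑ i ∈ Finset.range n, (1 : ℝ) / ((i : ℝ) + 1) ^ m := by
  induction n with
  | zero => simp [H]
  | succ k ih => rw [H_succ, Finset.sum_range_succ, ih]

lemma step_alg (a b x : ℝ) (h2 : x + 2 ≠ 0) (h3 : x + 3 ≠ 0) :
    (a + 1/(x+2)^2)^2 - (a + 1/(x+2)^2) - (b + 1/(x+2)^3) + 1
      - (a + 1/(x+2)^2 + 1/(x+3)^2)^2/(x+3) + 2*(a + 1/(x+2)^2)/(x+3) - 1/(x+3)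
      + 2*(a + 1/(x+2)^2 + 1/(x+3)^2)/(x+3)^3 - 1/(x+3)^5
    = (a^2 - a - b + 1 - (a + 1/(x+2)^2)^2/(x+2) + 2*a/(x+2) - 1/(x+2)
      + 2*(a + 1/(x+2)^2)/(x+2)^3 - 1/(x+2)^5)
      + a^2/((x+2)*(x+3)) := by
  field_simp
  ring

noncomputable def RHS (n : ℕ) : ℝ :=
  (H (n + 1) 2) ^ 2 - H (n + 1) 2 - H (n + 1) 3 + 1
    - (H (n + 2) 2) ^ 2 / ((n : ℝ) + 2)
    + 2 * H (n + 1) 2 / ((n : ℝ) + 2)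
    - 1 / ((n : ℝ) + 2)
    + 2 * H (n + 2) 2 / ((n : ℝ) + 2) ^ 3
    - 1 / ((n : ℝ) + 2) ^ 5

lemma main_id : ∀ n : ℕ, 1 ≤ n →
    ∑ j ∈ Finset.Icc 1 n, (H j 2) ^ 2 / (((j : ℝ) + 1) * ((j : ℝ) + 2)) = RHS n := by
  intro n hn
  induction n with
  | zero => omega
  | succ k ih =>
    rcases Nat.eq_or_lt_of_le hn with h | h
    · -- k + 1 = 1, i.e. k = 0
      have hk : k = 0 := by omega
      subst hk
      simp only [Finset.Icc_self, Finset.sum_singleton, RHS]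
      rw [show (0:ℕ)+1+1 = 2 from rfl, show (0:ℕ)+1+2 = 3 from rfl]
      rw [show (3:ℕ) = 2+1 from rfl, show (2:ℕ) = 1+1 from rfl]
      simp only [H_succ, H_zero, show ∀ m, H 1 m = 1 from fun m => by simp [H]]
      norm_num
    · have hk : 1 ≤ k := by omega
      rw [show Finset.Icc 1 (k+1) = insert (k+1) (Finset.Icc 1 k) by
            ext x; simp [Nat.lt_succ_iff]; omega,
          Finset.sum_insert (by simp), ih hk, add_comm]
      have h2 : (k:ℝ) + 2 ≠ 0 := by positivity
      have h3 : (k:ℝ) + 3 ≠ 0 := by positivity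
      unfold RHS
      rw [show k+1+1 = k+2 from rfl, show k+1+2 = k+2+1 from rfl]
      rw [H_succ (k+2) 2, H_succ (k+1) 2, H_succ (k+1) 3]
      push_cast
      have key := step_alg (H (k+1) 2) (H (k+1) 3) (k:ℝ) h2 h3
      push_cast at key ⊢
      ring_nf at key ⊢
      exact key.symm


lemma tendsto_H2 : Tendsto (fun n => H n 2) atTop (nhds (π ^ 2 / 6)) := by
  have h := hasSum_zeta_two.tendsto_sum_nat.comp (tendsto_add_atTop_nat 1)
  refine h.congr fun n => ?_
  simp only [Function.comp]
  rw [H_range, Finset.sum_range_succ']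
  push_cast
  norm_num

lemma tendsto_H3 : Tendsto (fun n => H n 3) atTop (nhds zeta3) := by
  have hs : Summable (fun k : ℕ => 1 / ((k : ℝ) + 1) ^ 3) := by
    have h1 : Summable (fun n : ℕ => 1 / (n : ℝ) ^ 3) :=
      summable_one_div_nat_pow.mpr (by norm_num)
    have := (summable_nat_add_iff 1).mpr h1
    refine this.congr fun k => ?_
    push_cast; ring
  have h := hs.hasSum.tendsto_sum_nat
  refine h.congr fun n => (H_range n 3).symm

lemma tendsto_e : Tendsto (fun n : ℕ => 1 / ((n : ℝ) + 2)) atTop (nhds 0) := by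
  have := (tendsto_one_div_add_atTop_nhds_zero_nat : Tendsto (fun n : ℕ => 1 / ((n : ℝ) + 1)) atTop (𝓝 0)).comp (tendsto_add_atTop_nat 1)
  refine this.congr fun n => ?_
  simp only [Function.comp]
  push_cast; ring_nf

lemma tendsto_RHS : Tendsto RHS atTop (nhds (π ^ 4 / 36 - π ^ 2 / 6 - zeta3 + 1)) := by
  set p := π ^ 2 / 6
  have tA : Tendsto (fun n => H (n + 1) 2) atTop (nhds p) :=
    tendsto_H2.comp (tendsto_add_atTop_nat 1)
  have tB : Tendsto (fun n => H (n + 1) 3) atTop (nhds zeta3) :=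
    tendsto_H3.comp (tendsto_add_atTop_nat 1)
  have tC : Tendsto (fun n => H (n + 2) 2) atTop (nhds p) :=
    tendsto_H2.comp (tendsto_add_atTop_nat 2)
  have tE := tendsto_e
  have tprod : Tendsto (fun n : ℕ =>
      ((H (n + 1) 2, H (n + 1) 3), (H (n + 2) 2, 1 / ((n : ℝ) + 2)))) atTop
      (nhds ((p, zeta3), (p, 0))) :=
    (tA.prodMk_nhds tB).prodMk_nhds (tC.prodMk_nhds tE)
  have hcont : Continuous (fun q : (ℝ × ℝ) × (ℝ × ℝ) =>
      q.1.1 ^ 2 - q.1.1 - q.1.2 + 1 - q.2.1 ^ 2 * q.2.2 + 2 * q.1.1 * q.2.2 - q.2.2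
        + 2 * q.2.1 * q.2.2 ^ 3 - q.2.2 ^ 5) := by fun_prop
  have key := (hcont.tendsto _).comp tprod
  simp only [Function.comp_def] at key
  have hval : (π ^ 4 / 36 - π ^ 2 / 6 - zeta3 + 1 : ℝ)
      = p ^ 2 - p - zeta3 + 1 - p ^ 2 * 0 + 2 * p * 0 - 0 + 2 * p * 0 ^ 3 - 0 ^ 5 := by
    simp only [p]; ring
  rw [hval]
  refine key.congr fun n => ?_
  unfold RHS
  have h2 : ((n : ℝ) + 2) ≠ 0 := by positivity
  field_simp


theorem sum_H2_sq_div_shift1_shift2 :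
    (∀ n : ℕ, 1 ≤ n →
      ∑ j ∈ Finset.Icc 1 n, (H j 2) ^ 2 / (((j : ℝ) + 1) * ((j : ℝ) + 2)) =
        (H (n + 1) 2) ^ 2 - H (n + 1) 2 - H (n + 1) 3 + 1
          - (H (n + 2) 2) ^ 2 / ((n : ℝ) + 2)
          + 2 * H (n + 1) 2 / ((n : ℝ) + 2)
          - 1 / ((n : ℝ) + 2)
          + 2 * H (n + 2) 2 / ((n : ℝ) + 2) ^ 3
          - 1 / ((n : ℝ) + 2) ^ 5) ∧
    Tendsto (fun n : ℕ =>
        ∑ j ∈ Finset.Icc 1 n, (H j 2) ^ 2 / (((j : ℝ) + 1) * ((j : ℝ) + 2)))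
      atTop (nhds (π ^ 4 / 36 - π ^ 2 / 6 - zeta3 + 1)) := by
  constructor
  · exact main_id
  · refine tendsto_RHS.congr' ?_
    filter_upwards [eventually_ge_atTop 1] with n hn
    exact (main_id n hn).symm
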